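/- The Average-Impact value λ, defined by λ^N_v(i) = φ̄_i(N,v), is the unique measure of average impact satisfying all of the following three properties. (P11, Symmetric-Impact): for every game (N,v) and every pair of symmetric players i,j in (N,v), θ^N_v(i) = θ^N_v(j). (P12, Average-Value): for every game (N,v) with |N| = n, (1/2) Σ_{i∈N} θ^N_v(i) = 2^{−n} Σ_{C⊆N} v(C). (P13, Marginal-Impact): for every pair of games (N,v) and (N,w) on the same player set and every player i ∈ N, if MC^C_i(N,v) = MC^C_i(N,w) for all C ⊆ N\{i}, then θ^N_v(i) = θ^N_w(i). That is: λ satisfies P11, P12 and P13, and any measure of average impact θ satisfying these three properties equals λ on every game and every player. -/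

import Mathlib

open Finset

/-- The marginal contribution of player `i` to coalition `C` in a game with
characteristic function `v`: `MC^C_i(N,v) = v(C ∪ {i}) − v(C)`. -/
noncomputable def MC (v : Finset ℕ → ℝ) (C : Finset ℕ) (i : ℕ) : ℝ :=
  v (insert i C) - v C

/-- The Shapley value of player `i` in the game with player set `N` and
characteristic function `v`. -/
noncomputable def shapley (N : Finset ℕ) (v : Finset ℕ → ℝ) (i : ℕ) : ℝ :=
  ∑ C ∈ (N.erase i).powerset,
    ((C.card.factorial : ℝ) * ((N.card - C.card - 1).factorial : ℝ) /
      (N.card.factorial : ℝ)) * (v (insert i C) - v C)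

/-- The average Shapley value `φ̄_i(N,v) = 2^{1−n} Σ_{C ⊆ N, i ∈ C} φ_i(C,v)`. -/
noncomputable def avgShapley (N : Finset ℕ) (v : Finset ℕ → ℝ) (i : ℕ) : ℝ :=
  (2 / 2 ^ N.card : ℝ) * ∑ C ∈ N.powerset.filter (fun C => i ∈ C), shapley C v i

/-- The synergy value `χ^N_v(C) = v(C) − Σ_{i ∈ C} φ̄_i(N,v)`. -/
noncomputable def synergyValue (N : Finset ℕ) (v : Finset ℕ → ℝ) (C : Finset ℕ) : ℝ :=
  v C - ∑ i ∈ C, avgShapley N v i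

/-- Players `i` and `j` are symmetric in the game `(N,v)`. -/
def IsSymmetric (N : Finset ℕ) (v : Finset ℕ → ℝ) (i j : ℕ) : Prop :=
  i ∈ N ∧ j ∈ N ∧ ∀ C ⊆ N \ {i, j}, v (insert i C) = v (insert j C)

/-- Player `i` is a null player in the game `(N,v)`. -/
def IsNullPlayer (N : Finset ℕ) (v : Finset ℕ → ℝ) (i : ℕ) : Prop :=
  i ∈ N ∧ ∀ C ⊆ N, v (insert i C) = v C

/-- Player `i` is a dummy player in the game `(N,v)`. -/
def IsDummyPlayer (N : Finset ℕ) (v : Finset ℕ → ℝ) (i : ℕ) : Prop :=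
  i ∈ N ∧ ∀ C ⊆ N \ {i}, v (insert i C) = v C + v {i}

/-- A game of dummies: every player is a dummy player. -/
def GameOfDummies (N : Finset ℕ) (v : Finset ℕ → ℝ) : Prop :=
  ∀ i ∈ N, IsDummyPlayer N v i

/-- P11 (Symmetric-Impact). -/
def SymmetricImpact (θ : Finset ℕ → (Finset ℕ → ℝ) → ℕ → ℝ) : Prop :=
  ∀ (N : Finset ℕ) (v : Finset ℕ → ℝ), v ∅ = 0 →
    ∀ i j : ℕ, IsSymmetric N v i j → θ N v i = θ N v j

/-- P12 (Average-Value). -/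
def AverageValue (θ : Finset ℕ → (Finset ℕ → ℝ) → ℕ → ℝ) : Prop :=
  ∀ (N : Finset ℕ) (v : Finset ℕ → ℝ), v ∅ = 0 →
    (1 / 2 : ℝ) * ∑ i ∈ N, θ N v i = (1 / 2 ^ N.card : ℝ) * ∑ C ∈ N.powerset, v C

/-- P13 (Marginal-Impact). -/
def MarginalImpact (θ : Finset ℕ → (Finset ℕ → ℝ) → ℕ → ℝ) : Prop :=
  ∀ (N : Finset ℕ) (v w : Finset ℕ → ℝ), v ∅ = 0 → w ∅ = 0 → ∀ i ∈ N,
    (∀ C ⊆ N \ {i}, MC v C i = MC w C i) → θ N v i = θ N w i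

/-!
Existence: the average Shapley value inherits symmetry from the invariance of the Shapley value
under relabelling the players, marginality from being built out of marginal contributions alone,
and the average-value property from the efficiency `∑ i ∈ C, φ_i(C,v) = v(C)` summed over all
`C ⊆ N`.

Uniqueness follows Young's argument. On the subsets of `N` every game is `C ↦ ∑ T ⊆ C, d(T)`
for Harsanyi dividends `d` supported on `N.powerset`; induct on a finite set `F` containing the
support of `d`. A player `j` missing from some `T ∈ F` has the same marginal contributions as in
the game whose dividends are cut down to the coalitions containing `j`, whose support is smaller,
so P13 and the induction hypothesis settle `θ(j)`. The remaining players belong to every `T ∈ F`,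
so they are pairwise symmetric, and P11 with P12 forces their common value.
-/

open scoped Nat

section DoubleCounting

variable {α β : Type*} [DecidableEq α] [AddCommMonoid β]

theorem Finset.sum_sum_powerset_erase (M : Finset α) (f : Finset α → β) :
    ∑ i ∈ M, ∑ B ∈ (M.erase i).powerset, f B = ∑ B ∈ M.powerset, #(M \ B) • f B := by
  rw [sum_comm' (t' := M.powerset) (s' := (M \ ·)) (by simp [subset_erase]; tauto)]
  simp

theorem Finset.sum_sum_powerset_erase_insert (M : Finset α) (f : Finset α → β) :
    ∑ i ∈ M, ∑ B ∈ (M.erase i).powerset, f (insert i B) = ∑ S ∈ M.powerset, #S • f S := by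
  have reindex : ∀ i ∈ M, ∑ B ∈ (M.erase i).powerset, f (insert i B) =
      ∑ S ∈ M.powerset with i ∈ S, f S := fun i hi =>
    sum_nbij' (insert i) (erase · i)
      (by simp [insert_subset_iff, subset_erase, hi]; grind) (by simp [subset_erase]; grind)
      (by simp [subset_erase]) (fun _ hS => insert_erase (mem_filter.1 hS).2) (fun _ _ => rfl)
  rw [sum_congr rfl reindex, sum_comm' (t' := M.powerset) (s' := id) (by simp; grind)]
  simp

end DoubleCounting

noncomputable def shapleyWeight (n k : ℕ) : ℝ :=
  k ! * (n - k - 1)! / n !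

theorem shapley_eq_sum_shapleyWeight (M : Finset ℕ) (v : Finset ℕ → ℝ) (i : ℕ) :
    shapley M v i = ∑ B ∈ (M.erase i).powerset, shapleyWeight #M #B * MC v B i :=
  rfl

theorem card_mul_shapleyWeight_pred_sub {n k : ℕ} (hkn : k ≤ n) :
    k * shapleyWeight n (k - 1) - (n - k : ℕ) * shapleyWeight n k =
      (if k = n then 1 else 0) - (if k = 0 then 1 else 0) := by
  unfold shapleyWeight
  rcases Nat.eq_zero_or_pos k with rfl | hk
  · rcases Nat.eq_zero_or_pos n with rfl | hn
    · simp
    · rw [if_neg hn.ne, if_pos rfl, ← Nat.mul_factorial_pred hn.ne', Nat.cast_mul]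
      simp [field]
  rcases hkn.eq_or_lt with rfl | hkn
  · rw [if_pos rfl, if_neg hk.ne', Nat.sub_sub_self hk, Nat.sub_self,
      ← Nat.mul_factorial_pred hk.ne', Nat.cast_mul]
    simp [field]
  · have hsub : n - (k - 1) - 1 = n - k := by omega
    rw [if_neg hkn.ne, if_neg hk.ne', hsub, ← Nat.mul_factorial_pred hk.ne',
      ← Nat.mul_factorial_pred (Nat.sub_ne_zero_of_lt hkn)]
    push_cast
    ring

theorem sum_shapley (M : Finset ℕ) (v : Finset ℕ → ℝ) :
    ∑ i ∈ M, shapley M v i = v M - v ∅ := by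
  have hinsert : ∀ i ∈ M, ∑ B ∈ (M.erase i).powerset, shapleyWeight #M #B * v (insert i B) =
      ∑ B ∈ (M.erase i).powerset, shapleyWeight #M (#(insert i B) - 1) * v (insert i B) :=
    fun i _ => sum_congr rfl fun B hB => by
      rw [card_insert_of_notMem (notMem_mono (mem_powerset.1 hB) (notMem_erase i M)),
        Nat.add_sub_cancel]
  simp only [shapley_eq_sum_shapleyWeight, MC, mul_sub, sum_sub_distrib]
  rw [sum_congr rfl hinsert,
    sum_sum_powerset_erase_insert M fun S => shapleyWeight #M (#S - 1) * v S,
    sum_sum_powerset_erase, ← sum_sub_distrib]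
  calc ∑ S ∈ M.powerset, (#S • (shapleyWeight #M (#S - 1) * v S) -
        #(M \ S) • (shapleyWeight #M #S * v S))
      = ∑ S ∈ M.powerset, ((if S = M then 1 else 0) - (if S = ∅ then 1 else 0)) * v S := by
        refine sum_congr rfl fun S hS => ?_
        have hSM := mem_powerset.1 hS
        rw [card_sdiff_of_subset hSM, nsmul_eq_mul, nsmul_eq_mul, ← mul_assoc, ← mul_assoc,
          ← sub_mul, card_mul_shapleyWeight_pred_sub (card_le_card hSM)]
        have hcard : #S = #M ↔ S = M :=
          ⟨fun h => eq_of_subset_of_card_le hSM h.ge, by rintro rfl; rfl⟩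
        simp only [hcard, card_eq_zero]
    _ = v M - v ∅ := by simp [sub_mul, sum_sub_distrib, ite_mul]

theorem avgShapley_congr_MC {N : Finset ℕ} {v w : Finset ℕ → ℝ} {i : ℕ}
    (h : ∀ C ⊆ N \ {i}, MC v C i = MC w C i) : avgShapley N v i = avgShapley N w i := by
  simp only [avgShapley, shapley_eq_sum_shapleyWeight]
  refine congrArg _ (sum_congr rfl fun C hC => sum_congr rfl fun B hB => ?_)
  have hCN : C ⊆ N := mem_powerset.1 (mem_filter.1 hC).1
  rw [h B ((mem_powerset.1 hB).trans (erase_eq N i ▸ erase_subset_erase i hCN))]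

theorem avgShapley_averageValue : AverageValue avgShapley := by
  intro N v hv
  have hswap : ∑ i ∈ N, ∑ C ∈ N.powerset with i ∈ C, shapley C v i =
      ∑ C ∈ N.powerset, ∑ i ∈ C, shapley C v i :=
    sum_comm' (by simp; grind)
  simp only [avgShapley, ← mul_sum, hswap, sum_shapley, hv, sub_zero]
  ring

section Relabel

variable (e : ℕ ≃ ℕ)

theorem shapley_map (C : Finset ℕ) (v : Finset ℕ → ℝ) (i : ℕ) :
    shapley (C.map e.toEmbedding) v (e i) = shapley C (fun S => v (S.map e.toEmbedding)) i := by
  refine (sum_equiv e.finsetCongr (fun B => ?_) (fun B _ => ?_)).symm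
  · rw [mem_powerset, mem_powerset, Equiv.finsetCongr_apply, ← Equiv.coe_toEmbedding,
      ← map_erase, map_subset_map]
  · simp [map_insert]

theorem avgShapley_map (N : Finset ℕ) (v : Finset ℕ → ℝ) (i : ℕ) :
    avgShapley (N.map e.toEmbedding) v (e i) =
      avgShapley N (fun S => v (S.map e.toEmbedding)) i := by
  rw [avgShapley, avgShapley, card_map]
  refine congrArg _ (sum_equiv e.finsetCongr (fun C => ?_) (fun C _ => ?_)).symm
  · simp
  · exact (shapley_map e C v i).symm

end Relabel

theorem Finset.map_swap_eq_self {α : Type*} [DecidableEq α] {S : Finset α} {i j : α}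
    (h : i ∈ S ↔ j ∈ S) : S.map (Equiv.swap i j).toEmbedding = S := by
  ext x
  rw [mem_map_equiv, Equiv.symm_swap, Equiv.swap_apply_def]
  split_ifs <;> grind

section Symmetric

variable {N : Finset ℕ} {v : Finset ℕ → ℝ} {i j : ℕ}

theorem IsSymmetric.symm (h : IsSymmetric N v i j) : IsSymmetric N v j i :=
  ⟨h.2.1, h.1, fun C hC => (h.2.2 C (pair_comm j i ▸ hC)).symm⟩

theorem IsSymmetric.apply_map_swap_of_mem_of_notMem (h : IsSymmetric N v i j) {S : Finset ℕ}
    (hS : S ⊆ N) (hi : i ∈ S) (hj : j ∉ S) :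
    v (S.map (Equiv.swap i j).toEmbedding) = v S := by
  have hD : S.erase i ⊆ N \ {i, j} := fun x hx => by
    have := mem_erase.1 hx
    simp only [mem_sdiff, mem_insert, mem_singleton]
    exact ⟨hS this.2, by rintro (rfl | rfl) <;> simp_all⟩
  rw [← insert_erase hi, map_insert, map_swap_eq_self (by simp; grind),
    Equiv.coe_toEmbedding, Equiv.swap_apply_left]
  exact (h.2.2 _ hD).symm

theorem IsSymmetric.apply_map_swap (h : IsSymmetric N v i j) {S : Finset ℕ} (hS : S ⊆ N) :
    v (S.map (Equiv.swap i j).toEmbedding) = v S := by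
  by_cases hij : i ∈ S ↔ j ∈ S
  · rw [map_swap_eq_self hij]
  by_cases hi : i ∈ S
  · exact h.apply_map_swap_of_mem_of_notMem hS hi (by tauto)
  · rw [Equiv.swap_comm]
    exact h.symm.apply_map_swap_of_mem_of_notMem hS (by tauto) hi

theorem avgShapley_eq_of_isSymmetric (h : IsSymmetric N v i j) :
    avgShapley N v i = avgShapley N v j := by
  let σ := Equiv.swap i j
  calc avgShapley N v i = avgShapley N (fun S => v (S.map σ.toEmbedding)) i :=
        avgShapley_congr_MC fun C hC => by
          have hCN : C ⊆ N := hC.trans sdiff_subset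
          rw [MC, MC, h.apply_map_swap hCN, h.apply_map_swap (insert_subset h.1 hCN)]
    _ = avgShapley (N.map σ.toEmbedding) v (σ i) := (avgShapley_map σ N v i).symm
    _ = avgShapley N v j := by
        rw [map_swap_eq_self (iff_of_true h.1 h.2.1), Equiv.swap_apply_left]

end Symmetric

theorem avgShapley_symmetricImpact : SymmetricImpact avgShapley :=
  fun _ _ _ _ _ h => avgShapley_eq_of_isSymmetric h

theorem avgShapley_marginalImpact : MarginalImpact avgShapley :=
  fun _ _ _ _ _ _ _ h => avgShapley_congr_MC h

noncomputable def gameOfDividends (d : Finset ℕ → ℝ) (C : Finset ℕ) : ℝ :=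
  ∑ T ∈ C.powerset, d T

theorem exists_dividends (N : Finset ℕ) (v : Finset ℕ → ℝ) :
    ∃ d : Finset ℕ → ℝ, (∀ T, d T ≠ 0 → T ⊆ N) ∧ ∀ C ⊆ N, gameOfDividends d C = v C := by
  induction N using Finset.induction_on generalizing v with
  | empty =>
    refine ⟨fun T => if T = ∅ then v ∅ else 0, fun T hT => ?_, fun C hC => ?_⟩
    · simp_all
    · simp [gameOfDividends, subset_empty.1 hC]
  | insert a N ha ih =>
    obtain ⟨d₀, hd₀, hv⟩ := ih v
    obtain ⟨d₁, hd₁, hw⟩ := ih fun C => v (insert a C) - v C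
    let d : Finset ℕ → ℝ := fun T => if a ∈ T then d₁ (T.erase a) else d₀ T
    have hd_of_notMem : ∀ D ⊆ N, gameOfDividends d D = gameOfDividends d₀ D :=
      fun D hD => sum_congr rfl fun T hT => if_neg (notMem_mono ((mem_powerset.1 hT).trans hD) ha)
    have hd_insert :
        ∀ D ⊆ N, ∑ T ∈ D.powerset, d (insert a T) = gameOfDividends d₁ D :=
      fun D hD => sum_congr rfl fun T hT => by
        simp [d, erase_insert (notMem_mono ((mem_powerset.1 hT).trans hD) ha)]
    refine ⟨d, fun T hT => ?_, fun C hC => ?_⟩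
    · by_cases haT : a ∈ T
      · rw [← insert_erase haT]
        exact insert_subset_insert a (hd₁ _ (by simpa [d, haT] using hT))
      · exact (hd₀ T (by simpa [d, haT] using hT)).trans (subset_insert a N)
    by_cases haC : a ∈ C
    · have hC' : C.erase a ⊆ N := by simpa [subset_insert_iff] using hC
      rw [← insert_erase haC, gameOfDividends, sum_powerset_insert (notMem_erase a C),
        ← gameOfDividends, hd_of_notMem _ hC', hd_insert _ hC', hv _ hC', hw _ hC']
      ring
    · have hCN : C ⊆ N := (subset_insert_iff_of_notMem haC).1 hC
      rw [hd_of_notMem C hCN, hv C hCN]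

theorem MC_gameOfDividends (d : Finset ℕ → ℝ) {C : Finset ℕ} {j : ℕ} (hj : j ∉ C) :
    MC (gameOfDividends d) C j = ∑ T ∈ C.powerset, d (insert j T) := by
  rw [MC, gameOfDividends, sum_powerset_insert hj, gameOfDividends, add_sub_cancel_left]

theorem gameOfDividends_eq_zero {d : Finset ℕ → ℝ} {k : ℕ} (hk : ∀ T, d T ≠ 0 → k ∈ T)
    {C : Finset ℕ} (hkC : k ∉ C) : gameOfDividends d C = 0 :=
  sum_eq_zero fun T hT => by_contra fun hT0 => hkC (mem_powerset.1 hT (hk T hT0))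

theorem isSymmetric_gameOfDividends {N : Finset ℕ} {d : Finset ℕ → ℝ} {j k : ℕ}
    (hj : j ∈ N) (hk : k ∈ N) (hdj : ∀ T, d T ≠ 0 → j ∈ T) (hdk : ∀ T, d T ≠ 0 → k ∈ T) :
    IsSymmetric N (gameOfDividends d) j k := by
  refine ⟨hj, hk, fun C hC => ?_⟩
  obtain rfl | hjk := eq_or_ne j k
  · rfl
  have hjC : j ∉ C := fun h => by simpa using hC h
  have hkC : k ∉ C := fun h => by simpa using hC h
  rw [gameOfDividends_eq_zero hdk (by simp [hjk.symm, hkC]),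
    gameOfDividends_eq_zero hdj (by simp [hjk, hjC])]

theorem Finset.eq_of_sum_eq_of_constant_on {α K : Type*} [Field K] [CharZero K] {s : Finset α}
    {f g : α → K} {p : α → Prop} [DecidablePred p] {i : α} (hi : i ∈ s) (hpi : p i)
    (hsum : ∑ j ∈ s, f j = ∑ j ∈ s, g j) (hf : ∀ j ∈ s, p j → f j = f i)
    (hg : ∀ j ∈ s, p j → g j = g i) (hfg : ∀ j ∈ s, ¬ p j → f j = g j) : f i = g i := by
  have hdiff : ∑ j ∈ s, (f j - g j) = #(s.filter p) * (f i - g i) :=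
    calc ∑ j ∈ s, (f j - g j) = ∑ j ∈ s, if p j then f i - g i else 0 :=
          sum_congr rfl fun j hj => by
            split_ifs with hpj
            · rw [hf j hj hpj, hg j hj hpj]
            · rw [hfg j hj hpj, sub_self]
      _ = #(s.filter p) * (f i - g i) := by rw [← sum_filter, sum_const, nsmul_eq_mul]
  have hcard : (#(s.filter p) : K) ≠ 0 :=
    Nat.cast_ne_zero.2 (card_ne_zero.2 ⟨i, mem_filter.2 ⟨hi, hpi⟩⟩)
  rw [sum_sub_distrib, hsum, sub_self, eq_comm, mul_eq_zero] at hdiff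
  exact sub_eq_zero.1 (hdiff.resolve_left hcard)

section Uniqueness

variable {θ θ' : Finset ℕ → (Finset ℕ → ℝ) → ℕ → ℝ}

theorem AverageValue.sum_eq (hθ : AverageValue θ) (hθ' : AverageValue θ') {N : Finset ℕ}
    {v : Finset ℕ → ℝ} (hv : v ∅ = 0) : ∑ i ∈ N, θ N v i = ∑ i ∈ N, θ' N v i := by
  have := (hθ N v hv).trans (hθ' N v hv).symm
  linarith

theorem eq_on_gameOfDividends_of_axioms (h11 : SymmetricImpact θ) (h12 : AverageValue θ)
    (h13 : MarginalImpact θ) (h11' : SymmetricImpact θ') (h12' : AverageValue θ')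
    (h13' : MarginalImpact θ') (N : Finset ℕ) (F : Finset (Finset ℕ)) (d : Finset ℕ → ℝ)
    (hd0 : d ∅ = 0) (hdF : ∀ T, d T ≠ 0 → T ∈ F) {i : ℕ} (hi : i ∈ N) :
    θ N (gameOfDividends d) i = θ' N (gameOfDividends d) i := by
  induction F using Finset.strongInduction generalizing d i with
  | H F ih =>
  have hw0 : gameOfDividends d ∅ = 0 := by simp [gameOfDividends, hd0]
  have eq_of_notMem_some : ∀ j ∈ N, ¬ (∀ T ∈ F, j ∈ T) →
      θ N (gameOfDividends d) j = θ' N (gameOfDividends d) j := by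
    intro j hj hjF
    obtain ⟨T, hTF, hjT⟩ := not_forall₂.1 hjF
    let d' : Finset ℕ → ℝ := fun T => if j ∈ T then d T else 0
    have hd'0 : gameOfDividends d' ∅ = 0 := by simp [gameOfDividends, d']
    have hMC : ∀ C ⊆ N \ {j}, MC (gameOfDividends d) C j = MC (gameOfDividends d') C j :=
      fun C hC => by
        have hjC : j ∉ C := fun h => by simpa using hC h
        simp [MC_gameOfDividends _ hjC, d']
    rw [h13 N _ _ hw0 hd'0 j hj hMC, h13' N _ _ hw0 hd'0 j hj hMC]
    refine ih (F.filter (j ∈ ·)) (filter_ssubset.2 ⟨T, hTF, hjT⟩) d' (by simp [d'])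
      (fun T hT => ?_) hj
    by_cases hjT : j ∈ T
    · exact mem_filter.2 ⟨hdF T (by simpa [d', hjT] using hT), hjT⟩
    · simp [d', hjT] at hT
  by_cases hiF : ∀ T ∈ F, i ∈ T
  · have hsym : ∀ j ∈ N, (∀ T ∈ F, j ∈ T) → IsSymmetric N (gameOfDividends d) j i :=
      fun j hj hjF => isSymmetric_gameOfDividends hj hi (fun T hT => hjF T (hdF T hT))
        (fun T hT => hiF T (hdF T hT))
    exact eq_of_sum_eq_of_constant_on hi hiF (h12.sum_eq h12' hw0)
      (fun j hj hjF => h11 N _ hw0 j i (hsym j hj hjF))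
      (fun j hj hjF => h11' N _ hw0 j i (hsym j hj hjF)) eq_of_notMem_some
  · exact eq_of_notMem_some i hi hiF

theorem eq_of_impact_axioms (h11 : SymmetricImpact θ) (h12 : AverageValue θ)
    (h13 : MarginalImpact θ) (h11' : SymmetricImpact θ') (h12' : AverageValue θ')
    (h13' : MarginalImpact θ') {N : Finset ℕ} {v : Finset ℕ → ℝ} (hv : v ∅ = 0) {i : ℕ}
    (hi : i ∈ N) : θ N v i = θ' N v i := by
  obtain ⟨d, hdN, hdv⟩ := exists_dividends N v
  have hd0 : d ∅ = 0 := by simpa [gameOfDividends, hv] using hdv ∅ (empty_subset N)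
  have hw0 : gameOfDividends d ∅ = 0 := by simp [gameOfDividends, hd0]
  have hMC : ∀ C ⊆ N \ {i}, MC v C i = MC (gameOfDividends d) C i := fun C hC => by
    have hCN : C ⊆ N := hC.trans sdiff_subset
    rw [MC, MC, hdv C hCN, hdv _ (insert_subset hi hCN)]
  rw [h13 N v _ hv hw0 i hi hMC, h13' N v _ hv hw0 i hi hMC]
  exact eq_on_gameOfDividends_of_axioms h11 h12 h13 h11' h12' h13' N N.powerset d hd0
    (fun T hT => mem_powerset.2 (hdN T hT)) hi

end Uniqueness

/-- the Average-Impact value `λ^N_v(i) = φ̄_i(N,v)` is the unique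
measure of average impact satisfying P11 (Symmetric-Impact), P12 (Average-Value)
and P13 (Marginal-Impact). -/
theorem avgImpact_unique :
    (SymmetricImpact avgShapley ∧ AverageValue avgShapley ∧
      MarginalImpact avgShapley) ∧
    ∀ θ : Finset ℕ → (Finset ℕ → ℝ) → ℕ → ℝ,
      SymmetricImpact θ → AverageValue θ → MarginalImpact θ →
      ∀ (N : Finset ℕ) (v : Finset ℕ → ℝ), v ∅ = 0 →
        ∀ i ∈ N, θ N v i = avgShapley N v i :=
  ⟨⟨avgShapley_symmetricImpact, avgShapley_averageValue, avgShapley_marginalImpact⟩,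
    fun _ h11 h12 h13 _ _ hv _ hi => eq_of_impact_axioms h11 h12 h13
      avgShapley_symmetricImpact avgShapley_averageValue avgShapley_marginalImpact hv hi⟩
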